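/- arXiv:0903.4652 — 10 statements merged into one kernel-verified Lean document; each statement's English description precedes it below -/
import Mathlib

section
/- Let A be a pre-crystalline graded ring with group G, subring R, and homogeneous elements u : G → A. Then for every g ∈ G there is a (set) map σ_g : R → R determined by the condition u_g r = σ_g(r) u_g for all r ∈ R; each σ_g is a surjective ring homomorphism of R, and σ_e = Id_R. -/
/-- A pre-crystalline graded ring: an associative unital ring `A` with a group `G`,
an injective map `u : G → A` with `u 1 = 1` and `u g ≠ 0`, and a subring `R ⊆ A`, such that
(C1) `A = ⊕_{g ∈ G} R·u g` (internal direct sum of additive subgroups),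
(C2) `R·u g = u g·R` and `R·u g` is free of rank one as a left `R`-module with basis `u g`,
(C3) the decomposition makes `A` a `G`-graded ring, i.e. `(R u_g)(R u_h) ⊆ R u_{gh}`. -/
structure PreCrystalline (A : Type*) [Ring A] {G : Type*} [Group G] [DecidableEq G]
    (R : Subring A) (u : G → A) : Prop where
  u_inj : Function.Injective u
  u_one : u 1 = 1
  u_ne : ∀ g : G, u g ≠ 0
  /-- (C1): the additive subgroups `R·u g` form an internal direct sum decomposition of `A`. -/
  direct : DirectSum.IsInternal
    (fun g : G => (R.toAddSubgroup.map (AddMonoidHom.mulRight (u g)) : AddSubgroup A))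
  /-- (C2), first half: `R·u g = u g·R` for all `g`. -/
  comm : ∀ g : G, {a : A | ∃ r ∈ R, a = r * u g} = {a : A | ∃ r ∈ R, a = u g * r}
  /-- (C2), second half: `R·u g` is free as a left `R`-module with basis `u g`. -/
  free : ∀ g : G, ∀ r ∈ R, r * u g = 0 → r = 0
  /-- (C3): `(R u_g)(R u_h) ⊆ R u_{gh}`. -/
  graded : ∀ g h : G, ∀ r ∈ R, ∀ s ∈ R, ∃ t ∈ R, (r * u g) * (s * u h) = t * u (g * h)

/-- For a pre-crystalline graded ring there is, for every `g ∈ G`, a map `σ_g : R → R`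
determined by `u g * r = σ_g r * u g`; each `σ_g` is a surjective ring homomorphism
and `σ_e = Id_R`. -/
theorem preCrystalline_exists_sigma {A : Type*} [Ring A] {G : Type*} [Group G] [DecidableEq G]
    (R : Subring A) (u : G → A) (hA : PreCrystalline A R u) :
    ∃ σ : G → (R →+* R),
      (∀ (g : G) (r : R), u g * (r : A) = (σ g r : A) * u g) ∧
      (∀ g : G, Function.Surjective (σ g)) ∧
      σ 1 = RingHom.id R := by

  -- uniqueness of coefficients
  have uniq : ∀ (g : G) (s t : R), (s : A) * u g = (t : A) * u g → s = t := by
    intro g s t h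
    have h' : ((s : A) - t) * u g = 0 := by rw [sub_mul, h, sub_self]
    have := hA.free g ((s : A) - t) (R.sub_mem s.2 t.2) h'
    exact Subtype.ext (sub_eq_zero.mp this)
  have key : ∀ (g : G) (r : R), ∃ s : R, u g * (r : A) = (s : A) * u g := by
    intro g r
    have hmem : u g * (r : A) ∈ {a : A | ∃ r' ∈ R, a = u g * r'} := ⟨r, r.2, rfl⟩
    rw [← hA.comm g] at hmem
    obtain ⟨s, hs, hse⟩ := hmem
    exact ⟨⟨s, hs⟩, hse⟩
  choose f hf using key
  have fspec : ∀ (g : G) (s r : R), u g * (r : A) = (s : A) * u g → f g r = s := by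
    intro g s r h
    exact uniq g (f g r) s ((hf g r).symm.trans h)
  refine ⟨fun g => {
    toFun := f g
    map_one' := fspec g 1 1 (by simp)
    map_mul' := by
      intro r s
      apply fspec
      push_cast
      calc u g * ((r : A) * s) = (u g * r) * s := (mul_assoc _ _ _).symm
        _ = ((f g r : A) * u g) * s := by rw [hf g r]
        _ = (f g r : A) * (u g * s) := mul_assoc _ _ _
        _ = (f g r : A) * ((f g s : A) * u g) := by rw [hf g s]
        _ = ((f g r : A) * (f g s)) * u g := (mul_assoc _ _ _).symm
    map_zero' := fspec g 0 0 (by simp)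
    map_add' := by
      intro r s
      apply fspec
      push_cast
      rw [mul_add, add_mul, hf g r, hf g s] }, ?_, ?_, ?_⟩
  · intro g r
    exact hf g r
  · intro g s
    have hmem : (s : A) * u g ∈ {a : A | ∃ r' ∈ R, a = r' * u g} := ⟨s, s.2, rfl⟩
    rw [hA.comm g] at hmem
    obtain ⟨r, hr, hre⟩ := hmem
    exact ⟨⟨r, hr⟩, (fspec g s ⟨r, hr⟩ hre.symm)⟩
  · ext r
    have := fspec 1 r r (by rw [hA.u_one, one_mul, mul_one])
    simp [this]
end

section
/- Let A be a pre-crystalline graded ring with group G, subring R, and homogeneous elements u : G → A, and let σ_g : R → R be the maps determined by u_g r = σ_g(r) u_g. Then there is a map α : G × G → R determined by u_g u_h = α(g,h) u_{gh}, and for all g,h,t ∈ G and all r ∈ R the following identities hold: α(g,h)α(gh,t) = σ_g(α(h,t))α(g,ht), and σ_g(σ_h(r))α(g,h) = α(g,h)σ_{gh}(r). -/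
/-- For a pre-crystalline graded ring with maps `σ_g : R → R` determined by
`u g * r = σ_g r * u g`, there is a map `α : G × G → R` determined by
`u g * u h = α g h * u (g h)`, satisfying the generalized 2-cocycle identity
`α(g,h)α(gh,t) = σ_g(α(h,t))α(g,ht)` and `σ_g(σ_h(r))α(g,h) = α(g,h)σ_{gh}(r)`. -/
theorem preCrystalline_exists_alpha {A : Type*} [Ring A] {G : Type*} [Group G] [DecidableEq G]
    (R : Subring A) (u : G → A) (hA : PreCrystalline A R u)
    (σ : G → R → R) (hσ : ∀ (g : G) (r : R), u g * (r : A) = (σ g r : A) * u g) :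
    ∃ α : G → G → R,
      (∀ g h : G, u g * u h = (α g h : A) * u (g * h)) ∧
      (∀ g h t : G, α g h * α (g * h) t = σ g (α h t) * α g (h * t)) ∧
      (∀ (g h : G) (r : R), σ g (σ h r) * α g h = α g h * σ (g * h) r) := by

  have key : ∀ g h : G, ∃ t : R, u g * u h = (t : A) * u (g * h) := by
    intro g h
    obtain ⟨t, ht, heq⟩ := hA.graded g h 1 R.one_mem 1 R.one_mem
    exact ⟨⟨t, ht⟩, by simpa using heq⟩
  choose α hα using key
  have cancel : ∀ (g : G) (x y : R), (x : A) * u g = (y : A) * u g → x = y := by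
    intro g x y h
    have h0 : ((x : A) - (y : A)) * u g = 0 := by rw [sub_mul, h, sub_self]
    have := hA.free g _ (R.sub_mem x.2 y.2) h0
    exact Subtype.ext (sub_eq_zero.mp this)
  refine ⟨α, hα, ?_, ?_⟩
  · intro g h t
    apply cancel (g * h * t)
    push_cast
    calc (α g h : A) * (α (g * h) t : A) * u (g * h * t)
        = (α g h : A) * ((α (g * h) t : A) * u ((g * h) * t)) := by rw [mul_assoc]
      _ = (α g h : A) * (u (g * h) * u t) := by rw [hα]
      _ = ((α g h : A) * u (g * h)) * u t := by rw [mul_assoc]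
      _ = (u g * u h) * u t := by rw [hα]
      _ = u g * (u h * u t) := by rw [mul_assoc]
      _ = u g * ((α h t : A) * u (h * t)) := by rw [hα]
      _ = ((σ g (α h t) : A) * u g) * u (h * t) := by rw [← mul_assoc, hσ]
      _ = (σ g (α h t) : A) * ((α g (h * t) : A) * u (g * (h * t))) := by rw [mul_assoc, hα]
      _ = (σ g (α h t) : A) * (α g (h * t) : A) * u (g * h * t) := by
            rw [← mul_assoc, mul_assoc g h t]
  · intro g h r
    apply cancel (g * h)
    push_cast
    calc (σ g (σ h r) : A) * (α g h : A) * u (g * h)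
        = (σ g (σ h r) : A) * (u g * u h) := by rw [mul_assoc, hα]
      _ = ((σ g (σ h r) : A) * u g) * u h := by rw [mul_assoc]
      _ = (u g * (σ h r : A)) * u h := by rw [hσ]
      _ = u g * ((σ h r : A) * u h) := by rw [mul_assoc]
      _ = u g * (u h * (r : A)) := by rw [hσ]
      _ = (u g * u h) * (r : A) := by rw [mul_assoc]
      _ = ((α g h : A) * u (g * h)) * (r : A) := by rw [hα]
      _ = (α g h : A) * (u (g * h) * (r : A)) := by rw [mul_assoc]
      _ = (α g h : A) * ((σ (g * h) r : A) * u (g * h)) := by rw [hσ]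
      _ = (α g h : A) * (σ (g * h) r : A) * u (g * h) := by rw [mul_assoc]
end

section
/- Let A be a crystalline graded ring with group G, subring R, homogeneous elements u : G → A, maps σ_g (u_g r = σ_g(r) u_g) and α : G × G → R (u_g u_h = α(g,h) u_{gh}), and set H = {h ∈ G | α(h,h⁻¹) is invertible in R}. Then for every h ∈ H and every x ∈ G, both α(x,h) and α(h,x) are invertible in R. -/
/-- A monoid element with a left inverse and a right inverse is a unit. -/
lemma isUnit_of_left_right_inv {M : Type*} [Monoid M] {a b c : M}
    (h1 : b * a = 1) (h2 : a * c = 1) : IsUnit a := by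
  have hbc : b = c := by
    calc b = b * (a * c) := by rw [h2, mul_one]
    _ = (b * a) * c := by rw [mul_assoc]
    _ = c := by rw [h1, one_mul]
  exact ⟨⟨a, c, h2, hbc ▸ h1⟩, rfl⟩

/-- If `a*b` and `b*a` are both units, then `a` is a unit. -/
lemma isUnit_of_mul_isUnit_both {M : Type*} [Monoid M] {a b : M}
    (h1 : IsUnit (a * b)) (h2 : IsUnit (b * a)) : IsUnit a := by
  obtain ⟨v, hv⟩ := h1
  obtain ⟨w, hw⟩ := h2
  apply isUnit_of_left_right_inv (b := ↑w⁻¹ * b) (c := b * ↑v⁻¹)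
  · rw [mul_assoc, ← hw, Units.inv_mul]
  · rw [← mul_assoc, ← hv, Units.mul_inv]

/-- For a crystalline graded ring (a pre-crystalline graded ring that is torsion-free:
`α(g,h) r = 0` implies `r = 0`), with `H = {h ∈ G | α(h,h⁻¹) invertible in R}`:
for every `h ∈ H` and every `x ∈ G`, both `α(x,h)` and `α(h,x)` are invertible in `R`. -/
theorem crystalline_alpha_isUnit {A : Type*} [Ring A] {G : Type*} [Group G] [DecidableEq G]
    (R : Subring A) (u : G → A) (hA : PreCrystalline A R u)
    (σ : G → R → R) (hσ : ∀ (g : G) (r : R), u g * (r : A) = (σ g r : A) * u g)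
    (α : G → G → R) (hα : ∀ g h : G, u g * u h = (α g h : A) * u (g * h))
    (htf : ∀ (g h : G) (r : R), α g h * r = 0 → r = 0)
    (h x : G) (hH : IsUnit (α h h⁻¹)) :
    IsUnit (α x h) ∧ IsUnit (α h x) := by
  -- cancellation of `u g` on the right
  have cancel : ∀ (g : G) (r s : R), (r : A) * u g = (s : A) * u g → r = s := by
    intro g r s hrs
    have hm : ((r : A) - s) ∈ R := sub_mem r.2 s.2
    have h0 : ((r : A) - s) * u g = 0 := by rw [sub_mul, hrs, sub_self]
    have := hA.free g _ hm h0
    exact Subtype.ext (sub_eq_zero.mp this)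
  -- injectivity of σ g
  have σinj : ∀ (g : G) (r s : R), σ g r = σ g s → r = s := by
    intro g r s hrs
    have h1 : u g * ((r : A) - s) = 0 := by
      rw [mul_sub, hσ, hσ, hrs, sub_self]
    have h2 : (α g⁻¹ g : A) * ((r : A) - s) = 0 := by
      have h3 : u g⁻¹ * (u g * ((r : A) - s)) = 0 := by rw [h1, mul_zero]
      rw [← mul_assoc, hα, inv_mul_cancel, hA.u_one, mul_one] at h3
      exact h3
    have h4 : α g⁻¹ g * (r - s) = 0 := by
      apply Subtype.ext
      push_cast
      rw [mul_sub]
      rw [mul_sub] at h2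
      exact h2
    have := htf g⁻¹ g (r - s) h4
    exact sub_eq_zero.mp this
  -- surjectivity of σ g
  have σsurj : ∀ (g : G) (s : R), ∃ r : R, σ g r = s := by
    intro g s
    have hmem : (s : A) * u g ∈ {a : A | ∃ r ∈ R, a = r * u g} := ⟨s, s.2, rfl⟩
    rw [hA.comm g] at hmem
    obtain ⟨r, hr, hre⟩ := hmem
    refine ⟨⟨r, hr⟩, cancel g _ _ ?_⟩
    rw [← hσ g ⟨r, hr⟩]
    exact hre.symm
  -- σ g is multiplicative and unital
  have σmul : ∀ (g : G) (r s : R), σ g (r * s) = σ g r * σ g s := by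
    intro g r s
    apply cancel g
    have h1 : (σ g (r * s) : A) * u g = u g * (r : A) * s := by
      rw [← hσ]; push_cast; rw [← mul_assoc]
    have h2 : ((σ g r * σ g s : R) : A) * u g = u g * (r : A) * s := by
      push_cast
      rw [mul_assoc, ← hσ g s, ← mul_assoc, ← hσ g r, mul_assoc]
    rw [h1, h2]
  have σone : ∀ g : G, σ g 1 = 1 := by
    intro g
    apply cancel g
    rw [← hσ g 1]
    push_cast
    rw [mul_one, one_mul]
  -- σ g preserves units in both directions
  have σunit : ∀ (g : G) (r : R), IsUnit r ↔ IsUnit (σ g r) := by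
    intro g r
    constructor
    · rintro ⟨v, hv⟩
      apply isUnit_of_left_right_inv (b := σ g ↑v⁻¹) (c := σ g ↑v⁻¹)
      · rw [← σmul, ← hv, Units.inv_mul, σone]
      · rw [← σmul, ← hv, Units.mul_inv, σone]
    · rintro ⟨w, hw⟩
      obtain ⟨t, ht⟩ := σsurj g ↑w⁻¹
      apply isUnit_of_left_right_inv (b := t) (c := t)
      · apply σinj g
        rw [σmul, ht, ← hw, Units.inv_mul, σone]
      · apply σinj g
        rw [σmul, ht, ← hw, Units.mul_inv, σone]
  -- the 2-cocycle identity
  have cocycle : ∀ g h' l : G,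
      α g h' * α (g * h') l = σ g (α h' l) * α g (h' * l) := by
    intro g h' l
    apply cancel (g * h' * l)
    have e1 : ((α g h' * α (g * h') l : R) : A) * u (g * h' * l) = u g * u h' * u l := by
      push_cast
      rw [mul_assoc ((α g h' : A)), ← hα (g * h') l, ← mul_assoc, ← hα g h']
    have e2 : ((σ g (α h' l) * α g (h' * l) : R) : A) * u (g * h' * l) = u g * u h' * u l := by
      push_cast
      rw [mul_assoc g h' l, mul_assoc ((σ g (α h' l) : A)), ← hα g (h' * l),
        ← mul_assoc, ← hσ g (α h' l), mul_assoc, ← hα h' l, ← mul_assoc]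
    rw [e1, e2]
  -- α g 1 = 1 and α 1 g = 1
  have αone_r : ∀ g : G, α g 1 = 1 := by
    intro g
    apply cancel g
    have h1 := hα g 1
    rw [hA.u_one, mul_one, mul_one] at h1
    push_cast
    rw [one_mul, ← h1]
  have αone_l : ∀ g : G, α 1 g = 1 := by
    intro g
    apply cancel g
    have h1 := hα 1 g
    rw [hA.u_one, one_mul, one_mul] at h1
    push_cast
    rw [one_mul, ← h1]
  -- key identity: α(h,h⁻¹) = σ_h(α(h⁻¹,h)), hence α(h⁻¹,h) is a unit
  have k1 : α h h⁻¹ = σ h (α h⁻¹ h) := by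
    have c := cocycle h h⁻¹ h
    rw [mul_inv_cancel, inv_mul_cancel, αone_l, αone_r, mul_one, mul_one] at c
    exact c
  have hinv : IsUnit (α h⁻¹ h) := (σunit h _).mpr (k1 ▸ hH)
  constructor
  · -- α x h is a unit
    have r1 : α x h * α (x * h) h⁻¹ = σ x (α h h⁻¹) := by
      have c := cocycle x h h⁻¹
      rw [mul_inv_cancel, αone_r, mul_one] at c
      exact c
    have r2 : α (x * h) h⁻¹ * α x h = σ (x * h) (α h⁻¹ h) := by
      have c := cocycle (x * h) h⁻¹ h
      rw [mul_inv_cancel_right, inv_mul_cancel, αone_r, mul_one] at c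
      exact c
    exact isUnit_of_mul_isUnit_both (r1 ▸ (σunit x _).mp hH)
      (r2 ▸ (σunit (x * h) _).mp hinv)
  · -- α h x is a unit
    have l1 : σ h (α h⁻¹ (h * x)) * α h x = α h h⁻¹ := by
      have c := cocycle h h⁻¹ (h * x)
      rw [mul_inv_cancel, αone_l, mul_one, inv_mul_cancel_left] at c
      exact c.symm
    have l2 : σ h⁻¹ (α h x) * α h⁻¹ (h * x) = α h⁻¹ h := by
      have c := cocycle h⁻¹ h x
      rw [inv_mul_cancel, αone_l, mul_one] at c
      exact c.symm
    obtain ⟨v, hv⟩ := hH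
    obtain ⟨w, hw⟩ := hinv
    -- left inverse
    have left : (↑v⁻¹ * σ h (α h⁻¹ (h * x))) * α h x = 1 := by
      rw [mul_assoc, l1, ← hv, Units.inv_mul]
    -- right inverse, via σ_{h⁻¹}
    obtain ⟨t, ht⟩ := σsurj h⁻¹ (α h⁻¹ (h * x) * ↑w⁻¹)
    have right : α h x * t = 1 := by
      apply σinj h⁻¹
      rw [σmul, ht, σone, ← mul_assoc, l2, ← hw, Units.mul_inv]
    exact isUnit_of_left_right_inv left right
end

section
/- Let A be a crystalline graded ring with group G, subring R, homogeneous elements u : G → A, and α : G × G → R defined by u_g u_h = α(g,h) u_{gh}. Then H = {h ∈ G | α(h,h⁻¹) is invertible in R} is a subgroup of G. -/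
/-- For a crystalline graded ring (a pre-crystalline graded ring that is torsion-free:
`α(g,h) r = 0` implies `r = 0`), the set `H = {h ∈ G | α(h,h⁻¹) invertible in R}`
is a subgroup of `G`. -/
theorem crystalline_H_subgroup {A : Type*} [Ring A] {G : Type*} [Group G] [DecidableEq G]
    (R : Subring A) (u : G → A) (hA : PreCrystalline A R u)
    (σ : G → R → R) (hσ : ∀ (g : G) (r : R), u g * (r : A) = (σ g r : A) * u g)
    (α : G → G → R) (hα : ∀ g h : G, u g * u h = (α g h : A) * u (g * h))
    (htf : ∀ (g h : G) (r : R), α g h * r = 0 → r = 0) :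
    ∃ H : Subgroup G, ∀ h : G, h ∈ H ↔ IsUnit (α h h⁻¹) := by

  -- cancellation in R against u g
  have cancel : ∀ (g : G) (r s : R), (r : A) * u g = (s : A) * u g → r = s := by
    intro g r s h
    have h0 : ((r : A) - (s : A)) * u g = 0 := by rw [sub_mul, h, sub_self]
    have h1 := hA.free g _ (sub_mem r.2 s.2) h0
    exact Subtype.ext (by rwa [sub_eq_zero] at h1)
  -- σ is multiplicative and unital
  have σ_one : ∀ g : G, σ g 1 = 1 := by
    intro g
    apply cancel g
    have h1 := hσ g 1
    push_cast at h1 ⊢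
    rw [one_mul, ← h1, mul_one]
  have σ_mul : ∀ (g : G) (r s : R), σ g (r * s) = σ g r * σ g s := by
    intro g r s
    apply cancel g
    have h1 := hσ g (r * s)
    have h2 := hσ g r
    have h3 := hσ g s
    push_cast at h1 h2 h3 ⊢
    rw [← h1, ← mul_assoc, h2, mul_assoc, h3, mul_assoc]
  have σ_unit : ∀ (g : G) (r : R), IsUnit r → IsUnit (σ g r) := by
    intro g r hr
    rcases hr with ⟨v, rfl⟩
    refine ⟨⟨σ g v, σ g (v⁻¹ : Rˣ), ?_, ?_⟩, rfl⟩
    · rw [← σ_mul, Units.mul_inv, σ_one]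
    · rw [← σ_mul, Units.inv_mul, σ_one]
  -- α with identity arguments
  have α_one_right : ∀ g : G, α g 1 = 1 := by
    intro g
    apply cancel g
    have h1 := hα g 1
    rw [hA.u_one, mul_one, mul_one] at h1
    push_cast
    rw [← h1, one_mul]
  have α_one_left : ∀ g : G, α 1 g = 1 := by
    intro g
    apply cancel g
    have h1 := hα 1 g
    rw [hA.u_one, one_mul, one_mul] at h1
    push_cast
    rw [← h1, one_mul]
  -- cocycle identity
  have cocycle : ∀ g h k : G,
      α g h * α (g * h) k = σ g (α h k) * α g (h * k) := by
    intro g h k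
    apply cancel (g * h * k)
    have e1 : (u g * u h) * u k = ((α g h * α (g * h) k : R) : A) * u (g * h * k) := by
      rw [hα g h, mul_assoc, hα (g * h) k, ← mul_assoc]
      push_cast
      ring_nf
    have e2 : u g * (u h * u k) = ((σ g (α h k) * α g (h * k) : R) : A) * u (g * h * k) := by
      rw [hα h k, ← mul_assoc, hσ g (α h k), mul_assoc, hα g (h * k), ← mul_assoc,
        ← mul_assoc g h k]
      push_cast
      ring_nf
    rw [← e1, ← e2, mul_assoc]
  -- if α(h,h⁻¹) is a unit, then α(g,h) is a unit for every g
  have lemA : ∀ h : G, IsUnit (α h h⁻¹) → ∀ g : G, IsUnit (α g h) := by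
    intro h hh g
    rcases hh with ⟨β, hβ⟩
    have key : α g h * α (g * h) h⁻¹ = σ g (α h h⁻¹) := by
      have := cocycle g h h⁻¹
      rwa [mul_inv_cancel, α_one_right, mul_one] at this
    rcases σ_unit g _ ⟨β, hβ⟩ with ⟨γ, hγ⟩
    -- right inverse of α g h
    have hZ : α g h * (α (g * h) h⁻¹ * (γ⁻¹ : Rˣ)) = 1 := by
      rw [← mul_assoc, key, ← hγ, Units.mul_inv]
    set Z : R := α (g * h) h⁻¹ * (γ⁻¹ : Rˣ) with hZdef
    have hZ' : Z * α g h = 1 := by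
      have h0 : α g h * (Z * α g h - 1) = 0 := by
        rw [mul_sub, ← mul_assoc, hZ, one_mul, mul_one, sub_self]
      have := htf g h _ h0
      rwa [sub_eq_zero] at this
    exact ⟨⟨α g h, Z, hZ, hZ'⟩, rfl⟩
  -- inverse closure
  have inv_mem : ∀ h : G, IsUnit (α h h⁻¹) → IsUnit (α h⁻¹ h) := by
    intro h hh
    have key : α h⁻¹ h = σ h⁻¹ (α h h⁻¹) := by
      have := cocycle h⁻¹ h h⁻¹
      rwa [inv_mul_cancel, α_one_left, mul_one, mul_inv_cancel, α_one_right, mul_one] at this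
    rw [key]
    exact σ_unit _ _ hh
  refine ⟨{ carrier := {h : G | IsUnit (α h h⁻¹)}
            one_mem' := ?_
            mul_mem' := ?_
            inv_mem' := ?_ }, fun h => Iff.rfl⟩
  · intro g h hg hh
    show IsUnit (α (g * h) (g * h)⁻¹)
    have hginv : IsUnit (α g⁻¹ (g⁻¹)⁻¹) := by rw [inv_inv]; exact inv_mem g hg
    have hhinv : IsUnit (α h⁻¹ (h⁻¹)⁻¹) := by rw [inv_inv]; exact inv_mem h hh
    -- α (g*h) h⁻¹ is a unit, α h⁻¹ g⁻¹ is a unit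
    have h1 : IsUnit (α (g * h) h⁻¹) := lemA h⁻¹ hhinv (g * h)
    have h2 : IsUnit (α h⁻¹ g⁻¹) := lemA g⁻¹ hginv h⁻¹
    have key := cocycle (g * h) h⁻¹ g⁻¹
    rw [show g * h * h⁻¹ = g by group] at key
    rw [show h⁻¹ * g⁻¹ = (g * h)⁻¹ by rw [mul_inv_rev]] at key
    -- key : α (g*h) h⁻¹ * α g g⁻¹ = σ (g*h) (α h⁻¹ g⁻¹) * α (g*h) (g*h)⁻¹
    have hu : IsUnit (σ (g * h) (α h⁻¹ g⁻¹) * α (g * h) (g * h)⁻¹) := by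
      rw [← key]; exact h1.mul hg
    rcases σ_unit (g * h) _ h2 with ⟨w, hw⟩
    rcases hu with ⟨v, hv⟩
    have : α (g * h) (g * h)⁻¹ = (w⁻¹ : Rˣ) * v := by
      rw [hv, ← hw, ← mul_assoc, Units.inv_mul, one_mul]
    rw [this]
    exact ((w⁻¹ : Rˣ).isUnit).mul v.isUnit
  · show IsUnit (α 1 1⁻¹)
    rw [inv_one, α_one_left]
    exact isUnit_one
  · intro h hh
    show IsUnit (α h⁻¹ (h⁻¹)⁻¹)
    rw [inv_inv]
    exact inv_mem h hh
end

section
/- Let G be a finite group of order n acting on the right on a set F (written P·g), let k : F × G × G → ℤ be a spectrally twisted 2-cocycle, and let γ : F × G → ℤ satisfy γ_P(e) = 0 and n·k_P(g,h) = γ_P(g) + γ_{P·g}(h) − γ_P(gh) for all P ∈ F and g,h ∈ G. Let a : F × G → ℤ be the integers determined by 0 ≤ n·a_P(g) + γ_P(g) < n, and define m_P(g,h) = a_P(g) + a_{P·g}(h) − a_P(gh) + k_P(g,h). Then m_P(g,h) ∈ {0,1} for all P ∈ F and g,h ∈ G. -/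
/-- Let `G` be a finite group of order `n` acting on the right on a set `F`, `k` a
spectrally twisted 2-cocycle, `γ : F × G → ℤ` with `γ_P(e) = 0` and
`n·k_P(g,h) = γ_P(g) + γ_{P·g}(h) − γ_P(gh)`, and `a : F × G → ℤ` determined by
`0 ≤ n·a_P(g) + γ_P(g) < n`.  Then the `P`-maternal 2-cocycle
`m_P(g,h) = a_P(g) + a_{P·g}(h) − a_P(gh) + k_P(g,h)` takes values in `{0,1}`. -/
theorem maternal_cocycle_values {G F : Type*} [Group G] [Fintype G]
    (act : F → G → F)
    (hact_one : ∀ P : F, act P 1 = P)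
    (hact_mul : ∀ (P : F) (g h : G), act (act P g) h = act P (g * h))
    (k : F → G → G → ℤ)
    (hk : ∀ (P : F) (g h t : G),
      k P g h + k P (g * h) t = k (act P g) h t + k P g (h * t))
    (n : ℕ) (hn : n = Fintype.card G)
    (γ : F → G → ℤ) (hγe : ∀ P : F, γ P 1 = 0)
    (hγ : ∀ (P : F) (g h : G),
      (n : ℤ) * k P g h = γ P g + γ (act P g) h - γ P (g * h))
    (a : F → G → ℤ)
    (ha : ∀ (P : F) (g : G),
      0 ≤ (n : ℤ) * a P g + γ P g ∧ (n : ℤ) * a P g + γ P g < n)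
    (m : F → G → G → ℤ)
    (hm : ∀ (P : F) (g h : G),
      m P g h = a P g + a (act P g) h - a P (g * h) + k P g h)
    (P : F) (g h : G) :
    m P g h = 0 ∨ m P g h = 1 := by
  have hnpos : 0 < (n : ℤ) := by
    have := Fintype.card_pos (α := G); omega
  obtain ⟨h1, h1'⟩ := ha P g
  obtain ⟨h2, h2'⟩ := ha (act P g) h
  obtain ⟨h3, h3'⟩ := ha P (g * h)
  have key : (n : ℤ) * m P g h =
      ((n : ℤ) * a P g + γ P g) + ((n : ℤ) * a (act P g) h + γ (act P g) h)
        - ((n : ℤ) * a P (g * h) + γ P (g * h)) := by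
    rw [hm]; have := hγ P g h; linarith [this]
  have hlo : -(n : ℤ) < (n : ℤ) * m P g h := by linarith
  have hhi : (n : ℤ) * m P g h < 2 * n := by linarith
  have h0 : 0 ≤ m P g h := by nlinarith
  have h1 : m P g h ≤ 1 := by nlinarith
  omega
end

section
/- Let G be a group with neutral element e acting on the right on a set F (written P·g), let k : F × G × G → ℤ be a spectrally twisted 2-cocycle, and let a, r : F × G → ℤ with a_P(e) = r_P(e) = 0 for all P ∈ F. Set m_P(g,h) = a_P(g) + a_{P·g}(h) − a_P(gh) + k_P(g,h) and t_P(g,h) = r_P(g) + r_{P·g}(h) − r_P(gh) + k_P(g,h). Assume m_P(g,h) ∈ {0,1}, t_P(g,h) ≥ 0, and r_P(g) ≤ a_P(g) for all P ∈ F and g,h ∈ G. If r_P(g) < a_P(g) for some P ∈ F and g ∈ G, then: m_P(g,g⁻¹) = 1, r_{P·g}(g⁻¹) = a_{P·g}(g⁻¹), a_P(g) = r_P(g) + 1, and t_P(g,g⁻¹) = 0. -/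
/-- Let `G` act on the right on `F`, `k` be a spectrally twisted 2-cocycle, and
`a, r : F × G → ℤ` with `a_P(e) = r_P(e) = 0`.  With
`m_P(g,h) = a_P(g) + a_{P·g}(h) − a_P(gh) + k_P(g,h)` and
`t_P(g,h) = r_P(g) + r_{P·g}(h) − r_P(gh) + k_P(g,h)`, if `m` takes values in `{0,1}`,
`t ≥ 0`, `r ≤ a` everywhere, and `r_P(g) < a_P(g)` for some `P, g`, then
`m_P(g,g⁻¹) = 1`, `r_{P·g}(g⁻¹) = a_{P·g}(g⁻¹)`, `a_P(g) = r_P(g) + 1` and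
`t_P(g,g⁻¹) = 0`. -/
theorem order_above_maternal_conditions {G F : Type*} [Group G]
    (act : F → G → F)
    (hact_one : ∀ P : F, act P 1 = P)
    (hact_mul : ∀ (P : F) (g h : G), act (act P g) h = act P (g * h))
    (k : F → G → G → ℤ)
    (hk : ∀ (P : F) (g h t : G),
      k P g h + k P (g * h) t = k (act P g) h t + k P g (h * t))
    (a r : F → G → ℤ)
    (hae : ∀ P : F, a P 1 = 0) (hre : ∀ P : F, r P 1 = 0)
    (m t : F → G → G → ℤ)
    (hm : ∀ (P : F) (g h : G),
      m P g h = a P g + a (act P g) h - a P (g * h) + k P g h)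
    (ht : ∀ (P : F) (g h : G),
      t P g h = r P g + r (act P g) h - r P (g * h) + k P g h)
    (hm01 : ∀ (P : F) (g h : G), m P g h = 0 ∨ m P g h = 1)
    (ht0 : ∀ (P : F) (g h : G), 0 ≤ t P g h)
    (hra : ∀ (P : F) (g : G), r P g ≤ a P g)
    (P : F) (g : G) (hlt : r P g < a P g) :
    m P g g⁻¹ = 1 ∧
    r (act P g) g⁻¹ = a (act P g) g⁻¹ ∧
    a P g = r P g + 1 ∧
    t P g g⁻¹ = 0 := by
  have h1 := hm P g g⁻¹
  have h2 := ht P g g⁻¹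
  have h3 := hm01 P g g⁻¹
  have h4 := ht0 P g g⁻¹
  have h5 := hra (act P g) g⁻¹
  have h6 := hae P
  have h7 := hre P
  rw [mul_inv_cancel] at h1 h2
  omega
end

section
/- Let G be a group acting on the right on a set F (written P·g), let k : F × G × G → ℤ be a spectrally twisted 2-cocycle with k_P(g,e) = k_P(e,g) = 0 for all P ∈ F and g ∈ G, let r : F × G → ℤ, and fix g ∈ G. Define t_P(x,y) = r_P(x) + r_{P·x}(y) − r_P(xy) + k_P(x,y), and define r̃_P(x) = r_{P·g}(g⁻¹xg) + k_P(g, g⁻¹xg) − k_P(x, g) and t̃_P(x,y) = r̃_P(x) + r̃_{P·x}(y) − r̃_P(xy) + k_P(x,y). Then for all P ∈ F and x,y ∈ G: t̃_P(x,y) = t_{P·g}(g⁻¹xg, g⁻¹yg). -/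
/-- Conjugation of a graded order by `u g`, on the level of exponents.  Let `G` act on
the right on `F`, `k` be a spectrally twisted 2-cocycle with `k_P(g,e) = k_P(e,g) = 0`,
`r : F × G → ℤ`, and fix `g ∈ G`.  With
`t_P(x,y) = r_P(x) + r_{P·x}(y) − r_P(xy) + k_P(x,y)`,
`r̃_P(x) = r_{P·g}(g⁻¹xg) + k_P(g, g⁻¹xg) − k_P(x,g)` and
`t̃_P(x,y) = r̃_P(x) + r̃_{P·x}(y) − r̃_P(xy) + k_P(x,y)`, one has
`t̃_P(x,y) = t_{P·g}(g⁻¹xg, g⁻¹yg)`. -/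
theorem conjugated_order_t {G F : Type*} [Group G]
    (act : F → G → F)
    (hact_one : ∀ P : F, act P 1 = P)
    (hact_mul : ∀ (P : F) (g h : G), act (act P g) h = act P (g * h))
    (k : F → G → G → ℤ)
    (hk : ∀ (P : F) (g h t : G),
      k P g h + k P (g * h) t = k (act P g) h t + k P g (h * t))
    (hke : ∀ (P : F) (g : G), k P g 1 = 0 ∧ k P 1 g = 0)
    (r : F → G → ℤ) (g : G)
    (t : F → G → G → ℤ)
    (ht : ∀ (P : F) (x y : G),
      t P x y = r P x + r (act P x) y - r P (x * y) + k P x y)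
    (rt : F → G → ℤ)
    (hrt : ∀ (P : F) (x : G),
      rt P x = r (act P g) (g⁻¹ * x * g) + k P g (g⁻¹ * x * g) - k P x g)
    (tt : F → G → G → ℤ)
    (htt : ∀ (P : F) (x y : G),
      tt P x y = rt P x + rt (act P x) y - rt P (x * y) + k P x y)
    (P : F) (x y : G) :
    tt P x y = t (act P g) (g⁻¹ * x * g) (g⁻¹ * y * g) := by
  have e1 : g * (g⁻¹ * x * g) = x * g := by group
  have e2 : g⁻¹ * x * g * (g⁻¹ * y * g) = g⁻¹ * (x * y) * g := by group
  have e7 : g * (g⁻¹ * y * g) = y * g := by group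
  have h1 := hk P g (g⁻¹ * x * g) (g⁻¹ * y * g)
  have h2 := hk P x g (g⁻¹ * y * g)
  have h3 := hk P x y g
  rw [e1, e2] at h1
  rw [e7] at h2
  rw [htt, hrt, hrt, hrt, ht]; simp only [hact_mul]; rw [e1, e2]
  linarith
end

section
/- Let G be a finite group of order n acting on the right on a set F (written P·g), let k : F × G × G → ℤ be a spectrally twisted 2-cocycle with k_P(x,e) = 0 for all P ∈ F and x ∈ G, and let r : F × G → ℤ with r_P(e) = 0 for all P ∈ F. Define t_P(x,y) = r_P(x) + r_{P·x}(y) − r_P(xy) + k_P(x,y) and assume t_P(x,y) ∈ {0,1} for all P ∈ F and x,y ∈ G (i.e. the corresponding graded order is unital). Define γ_P(x) = (Σ_{z∈G} t_P(x,z)) − n·r_P(x). Then for all P ∈ F and x,y ∈ G: n·k_P(x,y) = γ_P(x) + γ_{P·x}(y) − γ_P(xy), and 0 ≤ n·r_P(x) + γ_P(x) < n. (Hence every unital graded order containing A is a maternal order, namely the one corresponding to γ.) -/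
/-- Every unital graded order is maternal, on the level of exponents.  Let `G` be a
finite group of order `n` acting on the right on `F`, `k` a spectrally twisted 2-cocycle
with `k_P(x,e) = 0`, and `r : F × G → ℤ` with `r_P(e) = 0` such that
`t_P(x,y) = r_P(x) + r_{P·x}(y) − r_P(xy) + k_P(x,y)` takes values in `{0,1}`.
With `γ_P(x) = (Σ_{z ∈ G} t_P(x,z)) − n·r_P(x)`, one has
`n·k_P(x,y) = γ_P(x) + γ_{P·x}(y) − γ_P(xy)` and `0 ≤ n·r_P(x) + γ_P(x) < n`. -/
theorem unital_order_is_maternal {G F : Type*} [Group G] [Fintype G]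
    (act : F → G → F)
    (hact_one : ∀ P : F, act P 1 = P)
    (hact_mul : ∀ (P : F) (g h : G), act (act P g) h = act P (g * h))
    (n : ℕ) (hn : n = Fintype.card G)
    (k : F → G → G → ℤ)
    (hk : ∀ (P : F) (g h t : G),
      k P g h + k P (g * h) t = k (act P g) h t + k P g (h * t))
    (hke : ∀ (P : F) (x : G), k P x 1 = 0)
    (r : F → G → ℤ) (hre : ∀ P : F, r P 1 = 0)
    (t : F → G → G → ℤ)
    (ht : ∀ (P : F) (x y : G),
      t P x y = r P x + r (act P x) y - r P (x * y) + k P x y)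
    (ht01 : ∀ (P : F) (x y : G), t P x y = 0 ∨ t P x y = 1)
    (γ : F → G → ℤ)
    (hγ : ∀ (P : F) (x : G), γ P x = (∑ z : G, t P x z) - (n : ℤ) * r P x)
    (P : F) (x y : G) :
    (n : ℤ) * k P x y = γ P x + γ (act P x) y - γ P (x * y) ∧
    0 ≤ (n : ℤ) * r P x + γ P x ∧ (n : ℤ) * r P x + γ P x < n := by
  classical
  have hact' : act (act P x) y = act P (x * y) := hact_mul P x y
  have ht1 : ∀ (Q : F) (g : G), t Q g 1 = 0 := by
    intro Q g
    rw [ht, mul_one, hke, hre]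
    ring
  have htnn : ∀ (Q : F) (g h : G), 0 ≤ t Q g h := by
    intro Q g h; rcases ht01 Q g h with h' | h' <;> omega
  have hcard : (Finset.univ : Finset G).card = n := by rw [hn]; rfl
  set f : G → ℤ := fun z => r (act P x) z - r P (x * z) + k P x z with hf
  have term : ∀ z : G, t P x z + t (act P x) y z - t P (x * y) z
      = t P x y + f z - f (y * z) := by
    intro z
    have hc := hk P x y z
    simp only [hf]
    rw [ht P x z, ht (act P x) y z, ht P (x * y) z, ht P x y, hact', mul_assoc]
    linarith
  have hsum : ∑ z : G, (t P x z + t (act P x) y z - t P (x * y) z)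
      = (n : ℤ) * t P x y := by
    calc ∑ z : G, (t P x z + t (act P x) y z - t P (x * y) z)
        = ∑ z : G, (t P x y + f z - f (y * z)) :=
          Finset.sum_congr rfl (fun z _ => term z)
      _ = (n : ℤ) * t P x y := by
          have hbij : ∑ z : G, f (y * z) = ∑ z : G, f z :=
            Fintype.sum_equiv (Equiv.mulLeft y) _ _ (fun z => rfl)
          rw [Finset.sum_sub_distrib, Finset.sum_add_distrib, hbij,
            Finset.sum_const, hcard]
          push_cast
          ring
  have hsum' : (∑ z : G, t P x z) + (∑ z : G, t (act P x) y z)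
      - (∑ z : G, t P (x * y) z) = (n : ℤ) * t P x y := by
    rw [← hsum, Finset.sum_sub_distrib, Finset.sum_add_distrib]
  have hnt : (n : ℤ) * t P x y
      = (n : ℤ) * r P x + (n : ℤ) * r (act P x) y - (n : ℤ) * r P (x * y)
        + (n : ℤ) * k P x y := by
    rw [ht]; ring
  refine ⟨by rw [hγ, hγ, hγ]; linarith, ?_, ?_⟩
  · rw [hγ]
    have : 0 ≤ ∑ z : G, t P x z :=
      Finset.sum_nonneg fun z _ => htnn P x z
    linarith
  · rw [hγ]
    have h1 : ∑ z ∈ (Finset.univ : Finset G).erase 1, t P x z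
        = ∑ z : G, t P x z := Finset.sum_erase _ (ht1 P x)
    have h2 : ∑ z ∈ (Finset.univ : Finset G).erase 1, t P x z
        ≤ ((Finset.univ : Finset G).erase 1).card • (1 : ℤ) :=
      Finset.sum_le_card_nsmul _ _ 1 (fun z _ => by rcases ht01 P x z with h | h <;> omega)
    have h3 : ((Finset.univ : Finset G).erase 1).card = n - 1 := by
      rw [Finset.card_erase_of_mem (Finset.mem_univ _), hcard]
    have hn1 : 1 ≤ n := by
      rw [hn]; exact Fintype.card_pos
    rw [h3, nsmul_eq_mul, mul_one] at h2
    have : ∑ z : G, t P x z ≤ (n : ℤ) - 1 := by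
      rw [← h1]
      calc ∑ z ∈ (Finset.univ : Finset G).erase 1, t P x z ≤ ((n - 1 : ℕ) : ℤ) := h2
        _ = (n : ℤ) - 1 := by omega
    linarith
end

section
/- Let G be a finite group of order n acting on the right on a set F (written P·g), let k : F × G × G → ℤ be a spectrally twisted 2-cocycle with k_P(x,e) = 0 for all P ∈ F and x ∈ G, and let r : F × G → ℤ with r_P(e) = 0 and t_P(x,y) := r_P(x) + r_{P·x}(y) − r_P(xy) + k_P(x,y) ≥ 0 for all P ∈ F and x,y ∈ G. Define γ_P(x) = (Σ_{z∈G} t_P(x,z)) − n·r_P(x), and let a : F × G → ℤ be the integers determined by 0 ≤ n·a_P(x) + γ_P(x) < n. Then n·k_P(x,y) = γ_P(x) + γ_{P·x}(y) − γ_P(xy) for all P, x, y, and a_P(x) ≤ r_P(x) for all P ∈ F and x ∈ G (so the maternal order corresponding to γ contains the given graded order). -/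
/-- Every graded order is contained in a maternal order, on the level of exponents.
Let `G` be a finite group of order `n` acting on the right on `F`, `k` a spectrally
twisted 2-cocycle with `k_P(x,e) = 0`, and `r : F × G → ℤ` with `r_P(e) = 0` and
`t_P(x,y) = r_P(x) + r_{P·x}(y) − r_P(xy) + k_P(x,y) ≥ 0`.  With
`γ_P(x) = (Σ_{z ∈ G} t_P(x,z)) − n·r_P(x)` and `a : F × G → ℤ` determined by
`0 ≤ n·a_P(x) + γ_P(x) < n`, one has
`n·k_P(x,y) = γ_P(x) + γ_{P·x}(y) − γ_P(xy)` and `a_P(x) ≤ r_P(x)`. -/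
theorem maternal_order_contains_order {G F : Type*} [Group G] [Fintype G]
    (act : F → G → F)
    (hact_one : ∀ P : F, act P 1 = P)
    (hact_mul : ∀ (P : F) (g h : G), act (act P g) h = act P (g * h))
    (n : ℕ) (hn : n = Fintype.card G)
    (k : F → G → G → ℤ)
    (hk : ∀ (P : F) (g h t : G),
      k P g h + k P (g * h) t = k (act P g) h t + k P g (h * t))
    (hke : ∀ (P : F) (x : G), k P x 1 = 0)
    (r : F → G → ℤ) (hre : ∀ P : F, r P 1 = 0)
    (t : F → G → G → ℤ)
    (ht : ∀ (P : F) (x y : G),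
      t P x y = r P x + r (act P x) y - r P (x * y) + k P x y)
    (ht0 : ∀ (P : F) (x y : G), 0 ≤ t P x y)
    (γ : F → G → ℤ)
    (hγ : ∀ (P : F) (x : G), γ P x = (∑ z : G, t P x z) - (n : ℤ) * r P x)
    (a : F → G → ℤ)
    (ha : ∀ (P : F) (x : G),
      0 ≤ (n : ℤ) * a P x + γ P x ∧ (n : ℤ) * a P x + γ P x < n)
    (P : F) (x y : G) :
    (n : ℤ) * k P x y = γ P x + γ (act P x) y - γ P (x * y) ∧
    a P x ≤ r P x := by
  have hnpos : (0 : ℤ) < n := by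
    rw [hn]; exact_mod_cast Fintype.card_pos
  -- key k-sum identity
  have key : (n : ℤ) * k P x y + ∑ z : G, k P (x * y) z =
      (∑ z : G, k (act P x) y z) + ∑ z : G, k P x z := by
    have h1 : ∑ z : G, (k P x y + k P (x * y) z) =
        ∑ z : G, (k (act P x) y z + k P x (y * z)) :=
      Finset.sum_congr rfl fun z _ => hk P x y z
    have h2 : ∑ z : G, k P x (y * z) = ∑ z : G, k P x z :=
      Equiv.sum_comp (Equiv.mulLeft y) (k P x)
    rw [Finset.sum_add_distrib, Finset.sum_add_distrib, Finset.sum_const, h2] at h1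
    simpa [Finset.card_univ, hn, nsmul_eq_mul] using h1
  -- expansion of γ
  have expand : ∀ (Q : F) (u : G), γ Q u =
      (∑ z : G, r (act Q u) z) - (∑ z : G, r Q (u * z)) + ∑ z : G, k Q u z := by
    intro Q u
    rw [hγ]
    have h1 : ∑ z : G, t Q u z =
        ∑ z : G, (r Q u + r (act Q u) z - r Q (u * z) + k Q u z) :=
      Finset.sum_congr rfl fun z _ => ht Q u z
    rw [h1]
    rw [Finset.sum_add_distrib, Finset.sum_sub_distrib, Finset.sum_add_distrib,
      Finset.sum_const]
    simp only [Finset.card_univ, ← hn, nsmul_eq_mul]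
    ring
  constructor
  · rw [expand P x, expand (act P x) y, expand P (x * y)]
    have e1 : ∑ z : G, r (act P x) (y * z) = ∑ z : G, r (act P x) z :=
      Equiv.sum_comp (Equiv.mulLeft y) (r (act P x))
    have e2 : ∑ z : G, r P (x * (y * z)) = ∑ z : G, r P (x * z) :=
      Equiv.sum_comp (Equiv.mulLeft y) (fun z => r P (x * z))
    have e3 : ∑ z : G, r P (x * y * z) = ∑ z : G, r P (x * (y * z)) := by
      apply Finset.sum_congr rfl; intro z _; rw [mul_assoc]
    have e4 : act (act P x) y = act P (x * y) := hact_mul P x y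
    rw [e4, e1, e3, e2]
    linarith [key]
  · have hsum : 0 ≤ ∑ z : G, t P x z :=
      Finset.sum_nonneg fun z _ => ht0 P x z
    have h2 := (ha P x).2
    have hγx := hγ P x
    have hmul : (n : ℤ) * a P x < (n : ℤ) * (r P x + 1) := by nlinarith
    have := lt_of_mul_lt_mul_left hmul (le_of_lt hnpos)
    omega
end

section
/- Let G be a finite group of order n with neutral element e, and let m, m′ : G × G → ℤ and l : G → ℤ satisfy: m′(g,h) + l(gh) = m(g,h) + l(g) + l(h) for all g,h ∈ G; m(e,e) = m′(e,e) = 0; m(g,h) ∈ {0,1} for all g,h ∈ G; and m′(g,h) ≥ 0 for all g,h ∈ G. Then l(g) ≥ 0 for all g ∈ G. -/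
/-- Let `G` be a finite group, `m, m' : G × G → ℤ` and `l : G → ℤ` with
`m'(g,h) + l(gh) = m(g,h) + l(g) + l(h)` for all `g,h`, `m(e,e) = m'(e,e) = 0`,
`m` taking values in `{0,1}` and `m'` nonnegative.  Then `l` is nonnegative. -/
theorem equivalence_map_nonneg {G : Type*} [Group G] [Fintype G]
    (m m' : G → G → ℤ) (l : G → ℤ)
    (hrel : ∀ g h : G, m' g h + l (g * h) = m g h + l g + l h)
    (hme : m 1 1 = 0) (hm'e : m' 1 1 = 0)
    (hm01 : ∀ g h : G, m g h = 0 ∨ m g h = 1)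
    (hm'0 : ∀ g h : G, 0 ≤ m' g h) :
    ∀ g : G, 0 ≤ l g := by
  have hl1 : l 1 = 0 := by
    have h := hrel 1 1
    rw [one_mul, hme, hm'e] at h
    linarith
  intro g
  by_contra hneg
  push_neg at hneg
  have hg : l g ≤ -1 := by omega
  have key : ∀ k : ℕ, l (g ^ (k + 1)) ≤ -1 := by
    intro k
    induction k with
    | zero => simpa using hg
    | succ n ih =>
      have h1 := hrel (g ^ (n + 1)) g
      have h2 := hm'0 (g ^ (n + 1)) g
      rw [← pow_succ] at h1
      rcases hm01 (g ^ (n + 1)) g with h | h <;> omega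
  have ho := key (orderOf g - 1)
  have hp : orderOf g - 1 + 1 = orderOf g := Nat.succ_pred_eq_of_pos (orderOf_pos g)
  rw [hp, pow_orderOf_eq_one] at ho
  omega
end
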